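/- arXiv:1711.08172 — 2 statements merged into one kernel-verified Lean document; each statement's English description precedes it below -/
import Mathlib

section
/- Under the blockwise setting plus the PL inequality with constant μ and diam(χ_f*) ≤ M, a blockwise R-local minimizer x̄ of F = f + r satisfies d(x̄, χ*) ≤ (2√s/μ)(α + max{4β/(min_i R_i), 2√(βL)}) + M, where χ* is the set of global minimizers of F. -/
/-!
Let `ρ = minᵢ Rᵢ`. Moving `x̄` by `t ≤ ρ` inside the `i`-th block against the partial gradient
`gᵢ = (∇f x̄)ᵢ` cannot decrease `F`, so the descent lemma for `f` and the bound on `r` give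
`t ‖gᵢ‖ ≤ L t² / 2 + α t + 2β`. Choosing `t = ρ` or `t = (‖gᵢ‖ - α) / L` bounds `‖gᵢ‖ - α` by
`max (4β / ρ) (2√(βL))`, and summing squares over the `s` blocks gives
`‖∇f x̄‖ ≤ δ := √s (α + max …)`. A global minimiser `x*` of `F` obeys the same bound, so by the
error bound `μ d(·, χ_f*) ≤ ‖∇f‖` both `x̄` and `x*` lie within `δ / μ` of `χ_f*`, whose diameter
is at most `M`.
-/

open InnerProductSpace

theorem apply_add_le_of_norm_gradient_sub_le {E : Type*} [NormedAddCommGroup E]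
    [InnerProductSpace ℝ E] [CompleteSpace E] {f : E → ℝ} {L : ℝ} (hf : Differentiable ℝ f)
    (hLip : ∀ x y, ‖gradient f x - gradient f y‖ ≤ L * ‖x - y‖) (x d : E) :
    f (x + d) ≤ f x + ⟪gradient f x, d⟫_ℝ + L / 2 * ‖d‖ ^ 2 := by
  set φ : ℝ → ℝ := fun t => f (x + t • d) - t * ⟪gradient f x, d⟫_ℝ - L / 2 * t ^ 2 * ‖d‖ ^ 2
  have hφ' : ∀ t : ℝ, HasDerivAt φ
      (⟪gradient f (x + t • d), d⟫_ℝ - ⟪gradient f x, d⟫_ℝ - L * t * ‖d‖ ^ 2) t := by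
    intro t
    have hline : HasDerivAt (fun t : ℝ => x + t • d) d t := by
      simpa using ((hasDerivAt_id t).smul_const d).const_add x
    have hcomp := (hf (x + t • d)).hasGradientAt.hasFDerivAt.comp_hasDerivAt t hline
    rw [toDual_apply_apply] at hcomp
    have h := (hcomp.sub ((hasDerivAt_id t).mul_const ⟪gradient f x, d⟫_ℝ)).sub
      (((hasDerivAt_pow 2 t).const_mul (L / 2)).mul_const (‖d‖ ^ 2))
    exact h.congr_deriv (by simp only [Nat.cast_ofNat, Nat.add_one_sub_one, pow_one]; ring)
  have hφ'_nonpos : ∀ t, 0 ≤ t →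
      ⟪gradient f (x + t • d), d⟫_ℝ - ⟪gradient f x, d⟫_ℝ - L * t * ‖d‖ ^ 2 ≤ 0 := by
    intro t ht
    rw [sub_nonpos]
    calc ⟪gradient f (x + t • d), d⟫_ℝ - ⟪gradient f x, d⟫_ℝ
        = ⟪gradient f (x + t • d) - gradient f x, d⟫_ℝ := (inner_sub_left _ _ _).symm
      _ ≤ ‖gradient f (x + t • d) - gradient f x‖ * ‖d‖ := real_inner_le_norm _ _
      _ ≤ L * ‖t • d‖ * ‖d‖ := by gcongr; simpa using hLip (x + t • d) x
      _ = L * t * ‖d‖ ^ 2 := by rw [norm_smul, Real.norm_of_nonneg ht]; ring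
  have hanti : AntitoneOn φ (Set.Ici 0) := by
    refine antitoneOn_of_hasDerivWithinAt_nonpos (convex_Ici 0)
      (fun t _ => (hφ' t).continuousAt.continuousWithinAt)
      (fun t _ => (hφ' t).hasDerivWithinAt) fun t ht => hφ'_nonpos t ?_
    rw [interior_Ici] at ht
    exact ht.le
  have h01 : φ 1 ≤ φ 0 := hanti Set.self_mem_Ici (Set.mem_Ici.2 zero_le_one) zero_le_one
  simp only [φ, one_smul, zero_smul, add_zero, one_pow, one_mul, zero_mul, sub_zero,
    zero_pow two_ne_zero, mul_zero] at h01
  linarith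

theorem le_max_of_forall_mul_le_quadratic {c L β ρ : ℝ} (hρ : 0 < ρ)
    (h : ∀ t, 0 < t → t ≤ ρ → c * t ≤ L / 2 * t ^ 2 + 2 * β) :
    c ≤ max (4 * β / ρ) (2 * √(β * L)) := by
  rcases le_or_gt c 0 with hc | hc
  · exact hc.trans (le_max_of_le_right (by positivity))
  rcases le_or_gt (ρ * L) c with hLc | hcL
  · have hρc := h ρ hρ le_rfl
    have : L * ρ ^ 2 ≤ c * ρ := by nlinarith
    exact le_max_of_le_left ((le_div_iff₀ hρ).2 (by linarith))
  · have hL : 0 < L := pos_of_mul_pos_right (hc.trans hcL) hρ.le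
    have hcL' := h (c / L) (div_pos hc hL) ((div_le_iff₀ hL).2 (by linarith))
    have hsq : c ^ 2 ≤ 4 * β * L := by
      field_simp at hcL'
      nlinarith
    refine le_max_of_le_right ?_
    calc c = √(c ^ 2) := (Real.sqrt_sq hc.le).symm
      _ ≤ √(2 ^ 2 * (β * L)) := Real.sqrt_le_sqrt (by linarith)
      _ = 2 * √(β * L) := by rw [Real.sqrt_mul (by norm_num), Real.sqrt_sq (by norm_num)]

theorem dist_le_infDist_add_add_infDist {X : Type*} [PseudoMetricSpace X] {S : Set X} {M : ℝ}
    (hS : S.Nonempty) (hM : ∀ z ∈ S, ∀ w ∈ S, dist z w ≤ M) (x y : X) :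
    dist x y ≤ Metric.infDist x S + M + Metric.infDist y S := by
  have hy : ∀ z ∈ S, dist z y - M ≤ Metric.infDist y S := fun z hz =>
    (Metric.le_infDist hS).2 fun w hw => by
      linarith [dist_triangle z w y, hM z hz w hw, dist_comm y w]
  have hx : dist x y - M - Metric.infDist y S ≤ Metric.infDist x S :=
    (Metric.le_infDist hS).2 fun z hz => by linarith [dist_triangle x z y, hy z hz]
  linarith

theorem neg_inner_gradient_le_of_le_apply_add {E : Type*} [NormedAddCommGroup E]
    [InnerProductSpace ℝ E] [CompleteSpace E] {f r : E → ℝ} {L α β : ℝ} (hf : Differentiable ℝ f)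
    (hLip : ∀ x y, ‖gradient f x - gradient f y‖ ≤ L * ‖x - y‖)
    (hr : ∀ x y, |r x - r y| ≤ α * ‖x - y‖ + 2 * β) {x d : E}
    (hd : f x + r x ≤ f (x + d) + r (x + d)) :
    -⟪gradient f x, d⟫_ℝ ≤ L / 2 * ‖d‖ ^ 2 + α * ‖d‖ + 2 * β := by
  have hfd := apply_add_le_of_norm_gradient_sub_le hf hLip x d
  have hrd := (le_abs_self _).trans (hr (x + d) x)
  rw [add_sub_cancel_left] at hrd
  linarith

namespace PiLp

variable {ι : Type*} {E : ι → Type*}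

theorem toLp_update_add [DecidableEq ι] [∀ i, SeminormedAddCommGroup (E i)] (x : PiLp 2 E)
    (i : ι) (v : E i) :
    WithLp.toLp 2 (Function.update x i (x i + v)) = x + single 2 i v := by
  ext j
  rcases eq_or_ne j i with rfl | hj
  · rw [PiLp.toLp_apply, PiLp.add_apply, Function.update_self, single_eq_same]
  · rw [PiLp.toLp_apply, PiLp.add_apply, Function.update_of_ne hj, single_eq_of_ne 2 hj,
      add_zero]

variable [Fintype ι]

theorem norm_le_sqrt_card_mul [∀ i, SeminormedAddCommGroup (E i)] (x : PiLp 2 E) {C : ℝ}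
    (hC : 0 ≤ C) (h : ∀ i, ‖x i‖ ≤ C) : ‖x‖ ≤ √(Fintype.card ι) * C := by
  rw [norm_eq_of_L2, ← Real.sqrt_sq hC, ← Real.sqrt_mul (Nat.cast_nonneg _)]
  refine Real.sqrt_le_sqrt ?_
  calc ∑ i, ‖x i‖ ^ 2 ≤ ∑ _i : ι, C ^ 2 :=
        Finset.sum_le_sum fun i _ => pow_le_pow_left₀ (norm_nonneg _) (h i) 2
    _ = Fintype.card ι * C ^ 2 := by simp

theorem inner_single_right [DecidableEq ι] [∀ i, NormedAddCommGroup (E i)]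
    [∀ i, InnerProductSpace ℝ (E i)] (x : PiLp 2 E) (i : ι) (v : E i) :
    ⟪x, single 2 i v⟫_ℝ = ⟪x i, v⟫_ℝ := by
  rw [inner_apply, Finset.sum_eq_single i (fun j _ hj => by simp [hj]) (by simp),
    single_eq_same]

end PiLp

section Blockwise

variable {ι : Type*} [DecidableEq ι] {E : ι → Type*} [∀ i, NormedAddCommGroup (E i)]

def IsBlockwiseLocalMin (F : PiLp 2 E → ℝ) (R : ι → ℝ) (x : PiLp 2 E) : Prop :=
  ∀ i, ∀ v ∈ Metric.closedBall (x i) (R i), F x ≤ F (WithLp.toLp 2 (Function.update x i v))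

theorem IsBlockwiseLocalMin.mono {F : PiLp 2 E → ℝ} {R R' : ι → ℝ} {x : PiLp 2 E}
    (hx : IsBlockwiseLocalMin F R x) (hR : ∀ i, R' i ≤ R i) : IsBlockwiseLocalMin F R' x :=
  fun i v hv => hx i v (Metric.closedBall_subset_closedBall (hR i) hv)

theorem isBlockwiseLocalMin_of_forall_le {F : PiLp 2 E → ℝ} {x : PiLp 2 E}
    (hx : ∀ y, F x ≤ F y) (R : ι → ℝ) : IsBlockwiseLocalMin F R x :=
  fun _ _ _ => hx _

variable [Fintype ι] [∀ i, InnerProductSpace ℝ (E i)] [∀ i, CompleteSpace (E i)]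
  {f r : PiLp 2 E → ℝ} {L α β ρ : ℝ}

theorem IsBlockwiseLocalMin.norm_gradient_apply_le (hα : 0 ≤ α) (hρ : 0 < ρ)
    (hf : Differentiable ℝ f) (hLip : ∀ x y, ‖gradient f x - gradient f y‖ ≤ L * ‖x - y‖)
    (hr : ∀ x y, |r x - r y| ≤ α * ‖x - y‖ + 2 * β) {x : PiLp 2 E}
    (hx : IsBlockwiseLocalMin (f + r) (fun _ => ρ) x) (i : ι) :
    ‖gradient f x i‖ ≤ α + max (4 * β / ρ) (2 * √(β * L)) := by
  set G := gradient f x i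
  rcases eq_or_ne G 0 with hG | hG
  · rw [hG, norm_zero]
    exact add_nonneg hα (le_max_of_le_right (by positivity))
  have hG' : 0 < ‖G‖ := norm_pos_iff.2 hG
  rw [← sub_le_iff_le_add']
  refine le_max_of_forall_mul_le_quadratic hρ fun t ht htρ => ?_
  set v : E i := -((t / ‖G‖) • G) with hv_def
  have hv : ‖v‖ = t := by
    rw [hv_def, norm_neg, norm_smul, Real.norm_of_nonneg (by positivity),
      div_mul_cancel₀ _ hG'.ne']
  have hd : ‖PiLp.single 2 i v‖ = t := by rw [PiLp.norm_single, hv]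
  have hinner : ⟪gradient f x, PiLp.single 2 i v⟫_ℝ = -(t * ‖G‖) := by
    rw [PiLp.inner_single_right]
    change ⟪G, v⟫_ℝ = _
    rw [hv_def, inner_neg_right, real_inner_smul_right, real_inner_self_eq_norm_sq]
    field_simp
  have hmin := hx i (x i + v) (by rwa [Metric.mem_closedBall, dist_self_add_left, hv])
  rw [PiLp.toLp_update_add] at hmin
  have hdesc := neg_inner_gradient_le_of_le_apply_add hf hLip hr hmin
  rw [hinner, hd] at hdesc
  linarith

theorem IsBlockwiseLocalMin.norm_gradient_le (hα : 0 ≤ α) (hρ : 0 < ρ)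
    (hf : Differentiable ℝ f) (hLip : ∀ x y, ‖gradient f x - gradient f y‖ ≤ L * ‖x - y‖)
    (hr : ∀ x y, |r x - r y| ≤ α * ‖x - y‖ + 2 * β) {x : PiLp 2 E}
    (hx : IsBlockwiseLocalMin (f + r) (fun _ => ρ) x) :
    ‖gradient f x‖ ≤ √(Fintype.card ι) * (α + max (4 * β / ρ) (2 * √(β * L))) :=
  PiLp.norm_le_sqrt_card_mul _ (add_nonneg hα (le_max_of_le_right (by positivity)))
    (hx.norm_gradient_apply_le hα hρ hf hLip hr)

end Blockwise

theorem stmt_12_general (s : ℕ) (hs : 0 < s) (n : Fin s → ℕ)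
    (f r : PiLp 2 (fun i : Fin s => EuclideanSpace ℝ (Fin (n i))) → ℝ)
    (L μ α β M : ℝ) (hμ : 0 < μ) (hα : 0 ≤ α)
    (R : Fin s → ℝ) (hR : ∀ i, 0 < R i)
    (hf : Differentiable ℝ f)
    (hLip : ∀ x y, ‖gradient f x - gradient f y‖ ≤ L * ‖x - y‖)
    (χf : Set (PiLp 2 (fun i : Fin s => EuclideanSpace ℝ (Fin (n i)))))
    (hχfne : χf.Nonempty)
    (hgrad : ∀ x, μ * Metric.infDist x χf ≤ ‖gradient f x‖)
    (hdiam : ∀ x ∈ χf, ∀ y ∈ χf, dist x y ≤ M)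
    (hr : ∀ x y, |r x - r y| ≤ α * ‖x - y‖ + 2 * β)
    (F : PiLp 2 (fun i : Fin s => EuclideanSpace ℝ (Fin (n i))) → ℝ)
    (hF : ∀ x, F x = f x + r x)
    (χ : Set (PiLp 2 (fun i : Fin s => EuclideanSpace ℝ (Fin (n i)))))
    (hχ : χ = {x | ∀ y, F x ≤ F y}) (hχne : χ.Nonempty)
    (xbar : PiLp 2 (fun i : Fin s => EuclideanSpace ℝ (Fin (n i))))
    (hmin : ∀ i : Fin s, ∀ xi ∈ Metric.closedBall (xbar i) (R i),
      F xbar ≤ F (WithLp.toLp 2 (Function.update xbar i xi)))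
    (Rmin : ℝ)
    (hRmin : Rmin = Finset.univ.inf'
      (Finset.univ_nonempty_iff.mpr (Fin.pos_iff_nonempty.mp hs)) R) :
    Metric.infDist xbar χ ≤
      2 * Real.sqrt s / μ * (α + max (4 * β / Rmin) (2 * Real.sqrt (β * L))) + M := by
  obtain rfl : F = f + r := funext hF
  have hRmin_pos : 0 < Rmin := hRmin ▸ (Finset.lt_inf'_iff _).2 fun i _ => hR i
  have hRmin_le : ∀ i, Rmin ≤ R i := fun i => hRmin ▸ Finset.inf'_le _ (Finset.mem_univ i)
  set δ := √s * (α + max (4 * β / Rmin) (2 * √(β * L)))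
  have hdist : ∀ x, IsBlockwiseLocalMin (f + r) R x → Metric.infDist x χf ≤ δ / μ := by
    intro x hx
    have hgrad_le := (hx.mono hRmin_le).norm_gradient_le hα hRmin_pos hf hLip hr
    rw [Fintype.card_fin] at hgrad_le
    rw [le_div_iff₀' hμ]
    exact (hgrad x).trans hgrad_le
  obtain ⟨xs, hxs⟩ := hχne
  have hxs_min : ∀ y, (f + r) xs ≤ (f + r) y := by rw [hχ] at hxs; exact hxs
  calc Metric.infDist xbar χ ≤ dist xbar xs := Metric.infDist_le_dist_of_mem hxs
    _ ≤ Metric.infDist xbar χf + M + Metric.infDist xs χf :=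
      dist_le_infDist_add_add_infDist hχfne hdiam xbar xs
    _ ≤ δ / μ + M + δ / μ := by
      gcongr
      · exact hdist xbar hmin
      · exact hdist xs (isBlockwiseLocalMin_of_forall_le hxs_min R)
    _ = 2 * √s / μ * (α + max (4 * β / Rmin) (2 * √(β * L))) + M := by ring

theorem stmt_12 (s : ℕ) (hs : 0 < s) (n : Fin s → ℕ)
    (f r : PiLp 2 (fun i : Fin s => EuclideanSpace ℝ (Fin (n i))) → ℝ)
    (L μ α β M : ℝ) (hL : 0 ≤ L) (hμ : 0 < μ) (hα : 0 ≤ α) (hβ : 0 ≤ β) (hM : 0 ≤ M)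
    (R : Fin s → ℝ) (hR : ∀ i, 0 < R i)
    (hf : Differentiable ℝ f)
    (hLip : ∀ x y, ‖gradient f x - gradient f y‖ ≤ L * ‖x - y‖)
    (χf : Set (PiLp 2 (fun i : Fin s => EuclideanSpace ℝ (Fin (n i)))))
    (hχf : χf = {x | ∀ y, f x ≤ f y}) (hχfne : χf.Nonempty)
    (fstar : ℝ) (hfstar : ∀ x ∈ χf, f x = fstar)
    (hPL : ∀ x, μ * (f x - fstar) ≤ (1 / 2) * ‖gradient f x‖ ^ 2)
    (hgrad : ∀ x, μ * Metric.infDist x χf ≤ ‖gradient f x‖)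
    (hdiam : ∀ x ∈ χf, ∀ y ∈ χf, dist x y ≤ M)
    (hr : ∀ x y, |r x - r y| ≤ α * ‖x - y‖ + 2 * β)
    (F : PiLp 2 (fun i : Fin s => EuclideanSpace ℝ (Fin (n i))) → ℝ)
    (hF : ∀ x, F x = f x + r x)
    (χ : Set (PiLp 2 (fun i : Fin s => EuclideanSpace ℝ (Fin (n i)))))
    (hχ : χ = {x | ∀ y, F x ≤ F y}) (hχne : χ.Nonempty)
    (xbar : PiLp 2 (fun i : Fin s => EuclideanSpace ℝ (Fin (n i))))
    (hmin : ∀ i : Fin s, ∀ xi ∈ Metric.closedBall (xbar i) (R i),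
      F xbar ≤ F (WithLp.toLp 2 (Function.update xbar i xi)))
    (Rmin : ℝ)
    (hRmin : Rmin = Finset.univ.inf'
      (Finset.univ_nonempty_iff.mpr (Fin.pos_iff_nonempty.mp hs)) R) :
    Metric.infDist xbar χ ≤
      2 * Real.sqrt s / μ * (α + max (4 * β / Rmin) (2 * Real.sqrt (β * L))) + M :=
  stmt_12_general s hs n f r L μ α β M hμ hα R hR hf hLip χf hχfne hgrad hdiam hr F hF χ hχ hχne
    xbar hmin Rmin hRmin
end

section
/- Let F = f + r with ∇f L-Lipschitz and |r(x) − r(y)| ≤ α‖x − y‖ + 2β. If x̄ is an R-local minimizer of F up to η ≥ 0, i.e., F(x̄) ≤ min_{x ∈ B(x̄,R)} F(x) + η, then ‖∇f(x̄)‖ ≤ α + max{(4β + 2η)/R, √((4β + 2η)L)}. -/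
/-!
Write `v = ∇f xbar`. The descent lemma `f y ≤ f x + ⟪∇f x, y - x⟫ + L / 2 * ‖y - x‖ ^ 2`, applied at
`y = xbar - (t / ‖v‖) • v` with `0 < t ≤ R`, combined with the growth bound on `r` and the approximate
minimality, gives `t * (‖v‖ - α) ≤ L / 2 * t ^ 2 + (2 * β + η)`. Choosing `t = R` when
`L * R ≤ ‖v‖ - α` and `t = (‖v‖ - α) / L` otherwise yields the two terms of the maximum.
-/

open RealInnerProductSpace Metric

section

variable {E : Type*} [NormedAddCommGroup E] [InnerProductSpace ℝ E] [CompleteSpace E]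

theorem HasGradientAt.hasDerivAt_comp_add_smul {f : E → ℝ} {f' x w : E} {t : ℝ}
    (hf : HasGradientAt f f' (x + t • w)) :
    HasDerivAt (fun s : ℝ => f (x + s • w)) ⟪f', w⟫ t := by
  have hline : HasDerivAt (fun s : ℝ => x + s • w) w t := by
    simpa using ((hasDerivAt_id t).smul_const w).const_add x
  simpa [Function.comp_def] using hf.hasFDerivAt.comp_hasDerivAt t hline

theorem image_le_add_inner_gradient_add_sq {f : E → ℝ} {L : ℝ} (hf : Differentiable ℝ f)
    (hLip : ∀ x y, ‖gradient f x - gradient f y‖ ≤ L * ‖x - y‖) (x y : E) :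
    f y ≤ f x + ⟪gradient f x, y - x⟫ + L / 2 * ‖y - x‖ ^ 2 := by
  set w := y - x
  -- `φ` is antitone on `[0, ∞)` because `∇f` grows along the ray at most like `L t ‖w‖`.
  let φ : ℝ → ℝ := fun t => f (x + t • w) - t * ⟪gradient f x, w⟫ - L / 2 * t ^ 2 * ‖w‖ ^ 2
  have hφ : ∀ t : ℝ, HasDerivAt φ
      (⟪gradient f (x + t • w), w⟫ - ⟪gradient f x, w⟫ - L * t * ‖w‖ ^ 2) t := by
    intro t
    refine ((((hf (x + t • w)).hasGradientAt.hasDerivAt_comp_add_smul).sub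
      ((hasDerivAt_id t).mul_const ⟪gradient f x, w⟫)).sub
      (((hasDerivAt_pow 2 t).const_mul (L / 2)).mul_const (‖w‖ ^ 2))).congr_deriv ?_
    ring
  have hanti : AntitoneOn φ (Set.Ici 0) := by
    refine antitoneOn_of_hasDerivWithinAt_nonpos (convex_Ici 0)
      (fun t _ => (hφ t).continuousAt.continuousWithinAt)
      (fun t _ => (hφ t).hasDerivWithinAt) fun t ht => ?_
    rw [interior_Ici, Set.mem_Ioi] at ht
    have hgrowth : ‖gradient f (x + t • w) - gradient f x‖ ≤ L * (t * ‖w‖) := by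
      simpa [norm_smul, abs_of_pos ht] using hLip (x + t • w) x
    calc ⟪gradient f (x + t • w), w⟫ - ⟪gradient f x, w⟫ - L * t * ‖w‖ ^ 2
        = ⟪gradient f (x + t • w) - gradient f x, w⟫ - L * t * ‖w‖ ^ 2 := by
          rw [inner_sub_left]
      _ ≤ ‖gradient f (x + t • w) - gradient f x‖ * ‖w‖ - L * t * ‖w‖ ^ 2 := by
          gcongr; exact real_inner_le_norm _ _
      _ ≤ L * (t * ‖w‖) * ‖w‖ - L * t * ‖w‖ ^ 2 := by gcongr
      _ = 0 := by ring
  have h10 : φ 1 ≤ φ 0 := hanti (Set.mem_Ici.2 le_rfl) (Set.mem_Ici.2 zero_le_one) zero_le_one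
  simp only [φ, w, one_smul, zero_smul, add_zero, add_sub_cancel] at h10
  linarith

theorem mul_norm_gradient_sub_le_of_approx_localMin {f r : E → ℝ} {L α β η R : ℝ} (hf : Differentiable ℝ f)
    (hLip : ∀ x y, ‖gradient f x - gradient f y‖ ≤ L * ‖x - y‖)
    (hr : ∀ x y, |r x - r y| ≤ α * ‖x - y‖ + 2 * β) {xbar : E}
    (hmin : ∀ x ∈ closedBall xbar R, f xbar + r xbar ≤ f x + r x + η)
    (hv : gradient f xbar ≠ 0) {t : ℝ} (ht : 0 < t) (htR : t ≤ R) :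
    t * (‖gradient f xbar‖ - α) ≤ L / 2 * t ^ 2 + (2 * β + η) := by
  set v := gradient f xbar
  have hvpos : 0 < ‖v‖ := norm_pos_iff.2 hv
  set x := xbar - (t / ‖v‖) • v
  have hstep : x - xbar = -((t / ‖v‖) • v) := by simp only [x]; abel
  have hdist : ‖x - xbar‖ = t := by
    rw [hstep, norm_neg, norm_smul, Real.norm_of_nonneg (by positivity),
      div_mul_cancel₀ _ hvpos.ne']
  have hinner : ⟪v, x - xbar⟫ = -(t * ‖v‖) := by
    rw [hstep, inner_neg_right, real_inner_smul_right, real_inner_self_eq_norm_sq]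
    field_simp
  have hdescent := image_le_add_inner_gradient_add_sq hf hLip xbar x
  rw [hinner, hdist] at hdescent
  have hrx := (abs_le.1 (hr x xbar)).2
  rw [hdist] at hrx
  have hx := hmin x (by rw [mem_closedBall, dist_eq_norm, hdist]; exact htR)
  linarith

end

theorem le_max_of_forall_mul_le_half_mul_sq_add {g L c R : ℝ} (hR : 0 < R)
    (h : ∀ t, 0 < t → t ≤ R → t * g ≤ L / 2 * t ^ 2 + c) :
    g ≤ max (2 * c / R) (√(2 * c * L)) := by
  rcases le_or_gt (L * R) g with hLR | hLR
  · have hRg := h R hR le_rfl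
    refine le_max_of_le_left ((le_div_iff₀ hR).2 ?_)
    nlinarith
  rcases le_or_gt g 0 with hg | hg
  · exact le_max_of_le_right (hg.trans (Real.sqrt_nonneg _))
  -- test at the minimizer `t = g / L` of `L / 2 * t ^ 2 - t * g`, which lies in `(0, R)`
  have hL : 0 < L := pos_of_mul_pos_left (hg.trans hLR) hR.le
  have hgL := h (g / L) (by positivity) ((div_le_iff₀' hL).2 hLR.le)
  refine le_max_of_le_right ((Real.le_sqrt' hg).2 ?_)
  have : g / L * g = L / 2 * (g / L) ^ 2 + g ^ 2 / (2 * L) := by field_simp; ring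
  have : g ^ 2 / (2 * L) ≤ c := by linarith
  rw [div_le_iff₀ (by positivity)] at this
  linarith

theorem stmt_13_general (n : ℕ) (f r : EuclideanSpace ℝ (Fin n) → ℝ)
    (L α β R η : ℝ) (hα : 0 ≤ α) (hR : 0 < R)
    (hf : Differentiable ℝ f)
    (hLip : ∀ x y, ‖gradient f x - gradient f y‖ ≤ L * ‖x - y‖)
    (hr : ∀ x y, |r x - r y| ≤ α * ‖x - y‖ + 2 * β)
    (F : EuclideanSpace ℝ (Fin n) → ℝ) (hF : ∀ x, F x = f x + r x)
    (xbar : EuclideanSpace ℝ (Fin n))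
    (hmin : ∀ x ∈ Metric.closedBall xbar R, F xbar ≤ F x + η) :
    ‖gradient f xbar‖ ≤
      α + max ((4 * β + 2 * η) / R) (Real.sqrt ((4 * β + 2 * η) * L)) := by
  by_cases hv : gradient f xbar = 0
  · have : 0 ≤ max ((4 * β + 2 * η) / R) (Real.sqrt ((4 * β + 2 * η) * L)) :=
      le_max_of_le_right (Real.sqrt_nonneg _)
    rw [hv, norm_zero]
    linarith
  have hmin' : ∀ x ∈ closedBall xbar R, f xbar + r xbar ≤ f x + r x + η := by
    simpa only [hF] using hmin
  have hbound := le_max_of_forall_mul_le_half_mul_sq_add hR fun t ht htR =>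
    mul_norm_gradient_sub_le_of_approx_localMin hf hLip hr hmin' hv ht htR
  rw [show 4 * β + 2 * η = 2 * (2 * β + η) by ring]
  linarith

theorem stmt_13 (n : ℕ) (f r : EuclideanSpace ℝ (Fin n) → ℝ)
    (L α β R η : ℝ) (hL : 0 ≤ L) (hα : 0 ≤ α) (hβ : 0 ≤ β) (hR : 0 < R) (hη : 0 ≤ η)
    (hf : Differentiable ℝ f)
    (hLip : ∀ x y, ‖gradient f x - gradient f y‖ ≤ L * ‖x - y‖)
    (hr : ∀ x y, |r x - r y| ≤ α * ‖x - y‖ + 2 * β)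
    (F : EuclideanSpace ℝ (Fin n) → ℝ) (hF : ∀ x, F x = f x + r x)
    (xbar : EuclideanSpace ℝ (Fin n))
    (hmin : ∀ x ∈ Metric.closedBall xbar R, F xbar ≤ F x + η) :
    ‖gradient f xbar‖ ≤
      α + max ((4 * β + 2 * η) / R) (Real.sqrt ((4 * β + 2 * η) * L)) :=
  stmt_13_general n f r L α β R η hα hR hf hLip hr F hF xbar hmin
end
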